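/- arXiv:1903.08425 — 2 statements merged into one kernel-verified Lean document; each statement's English description precedes it below -/
import Mathlib

section
/- For every positive integer ℓ there exists a graph G such that e_𝒪(G) = 1 and η_𝒪(G) ≥ ℓ, where 𝒪 is the class of outerplanar graphs. Concretely, define G₁ = K₄ with P₁ a Hamiltonian path, and recursively (G_ℓ, P_ℓ) = σ(G_{ℓ−1}, P_{ℓ−1}); then e_𝒪(G_ℓ) = 1 and η_𝒪(G_ℓ) ≥ ℓ + 1. -/
/-!
Outerplanarity is certified by a one-page book embedding: `K₄` and `K_{2,3}` have none, and
having one survives passing to subgraphs and undoing subdivisions. `K₄` minus the chord `v₁v₃`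
of its Hamiltonian path `P₁` has such a layout in which `P₁` occupies consecutive positions, and
`σ` preserves this: `uᵢ` goes between `vᵢ` and `vᵢ₊₁`, where its two edges cross nothing. Hence
deleting one edge makes every `G_ℓ` outerplanar, while `G_ℓ` contains `K₄`.

For `η`, restrict an outerplanar partition of `σ(G,P)` to `G`. The new edges `vᵢuᵢ`, `uᵢvᵢ₊₁`
cannot all be uncut, as otherwise all of `P`, which spans a `K₄`, would lie in one part. So each
application of `σ` raises `η` by at least one, starting from `η(K₄) ≥ 2`.
-/

open Classical SimpleGraph

/-- A class of (simple) graphs: a predicate on graphs over every vertex type. -/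
abbrev GraphClass : Type 1 := ∀ (V : Type), SimpleGraph V → Prop

/-- `C` is closed under isomorphism. -/
def ClosedUnderIso (C : GraphClass) : Prop :=
  ∀ {V W : Type} (G : SimpleGraph V) (H : SimpleGraph W), Nonempty (G ≃g H) → C V G → C W H

/-- `C` is closed under taking subgraphs. -/
def ClosedUnderSubgraphs (C : GraphClass) : Prop :=
  ∀ {V : Type} (G : SimpleGraph V) (H : G.Subgraph), C V G → C ↥H.verts H.coe

/-- `C` is closed under taking disjoint unions. -/
def ClosedUnderDisjointUnion (C : GraphClass) : Prop :=
  ∀ {V W : Type} (G : SimpleGraph V) (H : SimpleGraph W),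
    C V G → C W H → C (V ⊕ W) (G.sum H)

/-- The edit distance from `G` to the (monotone) class `C`: the minimum number of
edges one needs to delete from `G` to obtain a graph in `C` (`⊤` if impossible). -/
noncomputable def editDist (C : GraphClass) {V : Type} (G : SimpleGraph V) : ℕ∞ :=
  sInf {n : ℕ∞ | ∃ F : Set (Sym2 V), F ⊆ G.edgeSet ∧ C V (G.deleteEdges F) ∧ (F.ncard : ℕ∞) = n}

/-- The set of edges of `G` whose two ends receive distinct labels under `f`. -/
def crossEdges {V : Type} (G : SimpleGraph V) (f : V → ℕ) : Set (Sym2 V) :=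
  {e | e ∈ G.edgeSet ∧ ∃ u v : V, e = s(u, v) ∧ f u ≠ f v}

/-- The `C`-edge-brittleness of `G`: the minimum, over partitions of `V(G)`
(given as labellings `f : V → ℕ`) all of whose parts induce subgraphs in `C`,
of the number of edges with ends in distinct parts. -/
noncomputable def edgeBrittleness (C : GraphClass) {V : Type} (G : SimpleGraph V) : ℕ∞ :=
  sInf {n : ℕ∞ | ∃ f : V → ℕ,
    (∀ i : ℕ, C ↥(f ⁻¹' {i}) (G.induce (f ⁻¹' {i}))) ∧ ((crossEdges G f).ncard : ℕ∞) = n}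

/-- Given a labelling `g` of the edges of `G`, the set of vertices incident with
edges in two distinct parts. -/
def brittleVertices {V : Type} (G : SimpleGraph V) (g : Sym2 V → ℕ) : Set V :=
  {v | ∃ e₁ e₂ : Sym2 V, e₁ ∈ G.edgeSet ∧ e₂ ∈ G.edgeSet ∧ v ∈ e₁ ∧ v ∈ e₂ ∧ g e₁ ≠ g e₂}

/-- The vertices incident with an edge of `G` in part `i` of the edge labelling `g`. -/
def partSupport {V : Type} (G : SimpleGraph V) (g : Sym2 V → ℕ) (i : ℕ) : Set V :=
  {v | ∃ e ∈ G.edgeSet, g e = i ∧ v ∈ e}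

/-- The subgraph of `G` induced by the edges in part `i` of the edge labelling `g`
(on its own vertex set: the vertices incident with those edges). -/
def partGraph {V : Type} (G : SimpleGraph V) (g : Sym2 V → ℕ) (i : ℕ) :
    SimpleGraph ↥(partSupport G g i) :=
  (SimpleGraph.fromEdgeSet {e | e ∈ G.edgeSet ∧ g e = i}).induce (partSupport G g i)

/-- The `C`-vertex-brittleness of `G`: the minimum, over partitions of `E(G)`
(given as labellings `g : Sym2 V → ℕ`) all of whose parts induce subgraphs in `C`,
of the number of vertices incident with edges in distinct parts. -/
noncomputable def vertexBrittleness (C : GraphClass) {V : Type} (G : SimpleGraph V) : ℕ∞ :=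
  sInf {n : ℕ∞ | ∃ g : Sym2 V → ℕ,
    (∀ i : ℕ, C ↥(partSupport G g i) (partGraph G g i)) ∧ ((brittleVertices G g).ncard : ℕ∞) = n}

/-- The `C̄`-capacity of `G`: the maximum number of pairwise edge-disjoint subgraphs
of `G`, none of which belongs to `C`. -/
noncomputable def capacity (C : GraphClass) {V : Type} (G : SimpleGraph V) : ℕ∞ :=
  sSup {n : ℕ∞ | ∃ m : ℕ, (m : ℕ∞) = n ∧ ∃ H : Fin m → G.Subgraph,
    (∀ i j, i ≠ j → Disjoint (H i).edgeSet (H j).edgeSet) ∧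
    (∀ i, ¬ C ↥(H i).verts (H i).coe)}

/-- The graph obtained from `G` by subdividing the edge `uv` once, using a new vertex. -/
def subdivideEdge {V : Type} (G : SimpleGraph V) (u v : V) : SimpleGraph (V ⊕ Unit) :=
  SimpleGraph.fromRel fun x y =>
    (∃ a b : V, x = Sum.inl a ∧ y = Sum.inl b ∧ G.Adj a b ∧ s(a, b) ≠ s(u, v)) ∨
    (∃ a : V, x = Sum.inl a ∧ y = Sum.inr () ∧ (a = u ∨ a = v))

/-- A graph bundled with its vertex type. -/
def FGraph : Type 1 := Σ V : Type, SimpleGraph V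

/-- `IsSubdivision G H` means `H` is (isomorphic to) a subdivision of `G`. -/
inductive IsSubdivision : FGraph → FGraph → Prop
  | of_iso {V W : Type} (G : SimpleGraph V) (H : SimpleGraph W) :
      Nonempty (G ≃g H) → IsSubdivision ⟨V, G⟩ ⟨W, H⟩
  | step {V : Type} (G : SimpleGraph V) {u v : V} (h : G.Adj u v) (H : FGraph) :
      IsSubdivision ⟨V ⊕ Unit, subdivideEdge G u v⟩ H → IsSubdivision ⟨V, G⟩ H

/-- `H` is a topological minor of `G`: some subgraph of `G` is isomorphic to a
subdivision of `H`. -/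
def IsTopMinor {W V : Type} (H : SimpleGraph W) (G : SimpleGraph V) : Prop :=
  ∃ S : G.Subgraph, IsSubdivision ⟨W, H⟩ ⟨↥S.verts, S.coe⟩

/-- An ideal: a class of graphs closed under isomorphism and topological minors. -/
def IsIdeal (C : GraphClass) : Prop :=
  ClosedUnderIso C ∧
  ∀ {V W : Type} (G : SimpleGraph V) (H : SimpleGraph W), IsTopMinor H G → C V G → C W H

/-- The image of vertex `v` in the `i`-th copy of `G` inside `Fan(G,S,k)`. -/
noncomputable def fanMap {V : Type} (S : Set V) (k : ℕ) (i : Fin k) (v : V) :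
    ↥S ⊕ (↥(Sᶜ : Set V) × Fin k) :=
  if h : v ∈ S then Sum.inl ⟨v, h⟩ else Sum.inr (⟨v, h⟩, i)

/-- `Fan G S k`: the graph obtained from `k` vertex-disjoint copies of `G` by
identifying, for each `v ∈ S`, all copies of `v` (and the copies of each edge of `G[S]`). -/
noncomputable def Fan {V : Type} (G : SimpleGraph V) (S : Set V) (k : ℕ) :
    SimpleGraph (↥S ⊕ (↥(Sᶜ : Set V) × Fin k)) :=
  SimpleGraph.fromRel fun x y =>
    ∃ (i : Fin k) (a b : V), G.Adj a b ∧ x = fanMap S k i a ∧ y = fanMap S k i b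

/-- The triangle `K₃`. -/
def K3 : SimpleGraph (Fin 3) := ⊤

/-- The complete graph `K₄`. -/
def K4 : SimpleGraph (Fin 4) := ⊤

/-- The complete bipartite graph `K_{2,n}`. -/
def K2n (n : ℕ) : SimpleGraph (Fin 2 ⊕ Fin n) := completeBipartiteGraph (Fin 2) (Fin n)

/-- The complete bipartite graph `K_{2,3}`. -/
def K23 : SimpleGraph (Fin 2 ⊕ Fin 3) := completeBipartiteGraph (Fin 2) (Fin 3)

/-- The diamond `D = K₄ ∖ e`. -/
def Diamond : SimpleGraph (Fin 4) := (⊤ : SimpleGraph (Fin 4)).deleteEdges {s((0 : Fin 4), 1)}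

/-- `K⁺_{2,3}`: `K_{2,3}` together with an edge joining the two degree-3 vertices. -/
def K23plus : SimpleGraph (Fin 2 ⊕ Fin 3) :=
  K23 ⊔ SimpleGraph.fromEdgeSet {s(Sum.inl 0, Sum.inl 1)}

/-- `W⁺_k`: the cycle on `2k` vertices together with a hub adjacent to the `k`
vertices in even position (the wheel with all rim edges subdivided). -/
def Wplus (k : ℕ) : SimpleGraph (Option (ZMod (2 * k))) :=
  SimpleGraph.fromRel fun x y =>
    (∃ a : ZMod (2 * k), x = some a ∧ y = some (a + 1)) ∨
    (∃ a : ZMod (2 * k), x = none ∧ y = some a ∧ a.val % 2 = 0)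

/-- An `H`-snare: a pair `(J,S)` with `H` a topological minor of `J`, `S` independent
in `J`, and `J ∖ S` connected. -/
def IsSnare {W V : Type} (H : SimpleGraph W) (J : SimpleGraph V) (S : Set V) : Prop :=
  IsTopMinor H J ∧ (∀ a ∈ S, ∀ b ∈ S, ¬ J.Adj a b) ∧ (J.induce Sᶜ).Connected

/-- Suppressing the vertex `v` in `J`: delete `v`, joining its (at most two) neighbours;
for a degree 2 vertex `v` this is the contraction `J/v` of an edge incident with `v`. -/
def suppress {V : Type} (J : SimpleGraph V) (v : V) : SimpleGraph ↥({v}ᶜ : Set V) :=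
  SimpleGraph.fromRel fun x y => J.Adj ↑x ↑y ∨ (J.Adj ↑x v ∧ J.Adj v ↑y)

/-- An `H`-trap: a minimal `H`-snare. -/
def IsTrap {W V : Type} (H : SimpleGraph W) (J : SimpleGraph V) (S : Set V) : Prop :=
  IsSnare H J S ∧
  (∀ J' : J.Subgraph, J' ≠ ⊤ → ¬ IsSnare H J'.coe {x : ↥J'.verts | ↑x ∈ S}) ∧
  (∀ v : V, v ∉ S → (J.neighborSet v).ncard = 2 →
    ¬ IsSnare H (suppress J v) {x : ↥({v}ᶜ : Set V) | ↑x ∈ S})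

/-- `G` has a tree-decomposition of width at most `w`. -/
def HasTreewidthLE {V : Type} (G : SimpleGraph V) (w : ℕ) : Prop :=
  ∃ (ι : Type) (_ : Fintype ι) (T : SimpleGraph ι) (β : ι → Set V),
    T.IsTree ∧
    (∀ u v : V, G.Adj u v → ∃ t : ι, u ∈ β t ∧ v ∈ β t) ∧
    (∀ v : V, (T.induce {t | v ∈ β t}).Connected) ∧
    (∀ t : ι, (β t).ncard ≤ w + 1)

/-- A graph is 2-connected if it has more than 2 vertices and remains connected
after deleting any single vertex. -/
def TwoConnected {V : Type} (G : SimpleGraph V) : Prop :=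
  2 < Nat.card V ∧ ∀ v : V, (G.induce {x | x ≠ v}).Connected

/-- The class of forests. -/
def ForestClass : GraphClass := fun _ G => G.IsAcyclic

/-- Outerplanar graphs: the graphs with no topological minor isomorphic to `K₄`
or `K_{2,3}`. -/
def Outerplanar {V : Type} (G : SimpleGraph V) : Prop :=
  ¬ IsTopMinor K4 G ∧ ¬ IsTopMinor K23 G

/-- The class of outerplanar graphs. -/
def OuterplanarClass : GraphClass := fun _ G => Outerplanar G

/-- The graph of `σ(G,P)`: for the path (walk) `P = v₀v₁⋯v_m`, add new vertices
`u₀,…,u_{m-1}`, where `uᵢ` is adjacent exactly to `vᵢ` and `v_{i+1}`. -/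
def sigmaGraph {V : Type} (G : SimpleGraph V) {a b : V} (P : G.Walk a b) :
    SimpleGraph (V ⊕ Fin P.length) :=
  SimpleGraph.fromRel fun x y =>
    (∃ p q : V, x = Sum.inl p ∧ y = Sum.inl q ∧ G.Adj p q) ∨
    (∃ (p : V) (i : Fin P.length), x = Sum.inl p ∧ y = Sum.inr i ∧
      (p = P.getVert i ∨ p = P.getVert (i + 1)))

/-- The new path `P'` of `σ(G,P)` (from the `j`-th vertex of `P` on). -/
noncomputable def sigmaWalk {V : Type} (G : SimpleGraph V) {a b : V} (P : G.Walk a b)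
    (j : ℕ) (h : j ≤ P.length) :
    (sigmaGraph G P).Walk (Sum.inl (P.getVert j)) (Sum.inl b) :=
  if hj : j = P.length then
    SimpleGraph.Walk.nil.copy (by rw [hj, SimpleGraph.Walk.getVert_length]) rfl
  else by
    have hlt : j < P.length := lt_of_le_of_ne h hj
    have adj1 : (sigmaGraph G P).Adj (Sum.inl (P.getVert j)) (Sum.inr ⟨j, hlt⟩) :=
      ⟨by simp, Or.inl (Or.inr ⟨P.getVert j, ⟨j, hlt⟩, rfl, rfl, Or.inl rfl⟩)⟩
    have adj2 : (sigmaGraph G P).Adj (Sum.inr ⟨j, hlt⟩) (Sum.inl (P.getVert (j + 1))) :=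
      ⟨by simp, Or.inr (Or.inr ⟨P.getVert (j + 1), ⟨j, hlt⟩, rfl, rfl, Or.inr rfl⟩)⟩
    exact SimpleGraph.Walk.cons adj1 (SimpleGraph.Walk.cons adj2 (sigmaWalk G P (j + 1) hlt))
  termination_by P.length - j
  decreasing_by omega

/-- A hemmed graph: a graph together with a walk in it. -/
structure HGraph where
  V : Type
  G : SimpleGraph V
  a : V
  b : V
  P : G.Walk a b

/-- The operation `σ` on hemmed graphs. -/
noncomputable def HGraph.step (X : HGraph) : HGraph :=
  ⟨X.V ⊕ Fin X.P.length, sigmaGraph X.G X.P, Sum.inl X.a, Sum.inl X.b,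
    (sigmaWalk X.G X.P 0 (Nat.zero_le _)).copy
      (by rw [SimpleGraph.Walk.getVert_zero]) rfl⟩

/-- Adding to `G` a new (apex) vertex adjacent exactly to the vertices in `X`. -/
def AddApex {V : Type} (G : SimpleGraph V) (X : Set V) : SimpleGraph (V ⊕ Unit) :=
  SimpleGraph.fromRel fun x y =>
    (∃ p q : V, x = Sum.inl p ∧ y = Sum.inl q ∧ G.Adj p q) ∨
    (∃ p : V, x = Sum.inl p ∧ y = Sum.inr () ∧ p ∈ X)

/-- A hemmed graph `(G,P)` is outerplanar: `G` has an outerplanar drawing with `P`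
on the boundary of the outer face; equivalently, the graph obtained by adding a new
vertex adjacent to all vertices of `P` is outerplanar. -/
def HemmedOuterplanar {V : Type} (G : SimpleGraph V) {a b : V} (P : G.Walk a b) : Prop :=
  Outerplanar (AddApex G {v | v ∈ P.support})

section TopologicalMinor

variable {U V W : Type}

lemma IsSubdivision.of_iso_right {A B : FGraph} (h : IsSubdivision A B) (H : SimpleGraph W) (e : B.2 ≃g H) : IsSubdivision A ⟨W, H⟩ := by
  induction h with
  | of_iso G H' e' => exact .of_iso _ _ ⟨(Classical.choice e').trans e⟩
  | step G hadj H' _ ih => exact .step _ hadj _ (ih e)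

lemma IsTopMinor.of_injective_hom {K : SimpleGraph U} {H : SimpleGraph V} {G : SimpleGraph W}
    (φ : H →g G) (hφ : Function.Injective φ) (h : IsTopMinor K H) : IsTopMinor K G := by
  obtain ⟨S, hS⟩ := h
  refine ⟨S.map φ, hS.of_iso_right _ ⟨Equiv.Set.image φ S.verts hφ, ?_⟩⟩
  rintro ⟨x, hx⟩ ⟨y, hy⟩
  exact Relation.map_apply_apply hφ hφ S.Adj x y

lemma Outerplanar.of_injective_hom {H : SimpleGraph V} {G : SimpleGraph W} (φ : H →g G)
    (hφ : Function.Injective φ) (h : Outerplanar G) : Outerplanar H :=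
  ⟨fun hK => h.1 (hK.of_injective_hom φ hφ), fun hK => h.2 (hK.of_injective_hom φ hφ)⟩

lemma Outerplanar.induce_of_injective_hom {H : SimpleGraph V} {G : SimpleGraph W}
    (φ : H →g G) (hφ : Function.Injective φ) {S : Set V} {T : Set W} (hST : ∀ v ∈ S, φ v ∈ T)
    (h : Outerplanar (G.induce T)) : Outerplanar (H.induce S) :=
  h.of_injective_hom ⟨fun v => ⟨φ v, hST v v.2⟩, fun hadj => φ.map_adj hadj⟩
    fun _ _ hxy => Subtype.ext (hφ (congrArg Subtype.val hxy))

lemma Outerplanar.induce {G : SimpleGraph V} (h : Outerplanar G) (S : Set V) :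
    Outerplanar (G.induce S) :=
  h.of_injective_hom (Embedding.induce S).toHom (Embedding.induce (G := G) S).injective

lemma Outerplanar.of_induce {G : SimpleGraph V} {S : Set V} (hS : ∀ v, v ∈ S)
    (h : Outerplanar (G.induce S)) : Outerplanar G :=
  h.of_injective_hom ⟨fun v => ⟨v, hS v⟩, id⟩ fun _ _ hvw => congrArg Subtype.val hvw

lemma not_outerplanar_K4 : ¬ Outerplanar K4 :=
  fun h => h.1 ⟨⊤, .of_iso _ _ ⟨Subgraph.topIso.symm⟩⟩

lemma exists_ne_of_not_outerplanar_induce {G : SimpleGraph V} {S : Set V}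
    (hS : ¬ Outerplanar (G.induce S)) {f : V → ℕ}
    (hf : ∀ i, Outerplanar (G.induce (f ⁻¹' {i}))) {x : V} :
    ∃ y ∈ S, f y ≠ f x := by
  by_contra! h
  exact hS ((hf (f x)).induce_of_injective_hom Hom.id Function.injective_id h)

end TopologicalMinor

section OnePageLayout

variable {V W : Type}

/-- Up to renaming their ends, any two crossing edges of a linear layout look like this. -/
def Crosses (f : V → ℚ) (a b c d : V) : Prop := f a < f c ∧ f c < f b ∧ f b < f d

def NonCrossing (G : SimpleGraph V) (f : V → ℚ) : Prop :=
  ∀ a b c d, G.Adj a b → G.Adj c d → ¬ Crosses f a b c d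

def HasOnePageLayout (G : SimpleGraph V) : Prop :=
  ∃ f : V → ℚ, Function.Injective f ∧ NonCrossing G f

lemma NonCrossing.comap {G : SimpleGraph V} {H : SimpleGraph W} {f : W → ℚ} (φ : G →g H)
    (h : NonCrossing H f) : NonCrossing G (f ∘ φ) :=
  fun a b c d hab hcd => h (φ a) (φ b) (φ c) (φ d) (φ.map_adj hab) (φ.map_adj hcd)

lemma NonCrossing.neg {G : SimpleGraph V} {f : V → ℚ} (h : NonCrossing G f) :
    NonCrossing G (-f) := by
  rintro a b c d hab hcd ⟨h₁, h₂, h₃⟩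
  simp only [Pi.neg_apply, neg_lt_neg_iff] at h₁ h₂ h₃
  exact h d c b a hcd.symm hab.symm ⟨h₃, h₂, h₁⟩

lemma HasOnePageLayout.of_injective_hom {G : SimpleGraph V} {H : SimpleGraph W} (φ : G →g H)
    (hφ : Function.Injective φ) (h : HasOnePageLayout H) : HasOnePageLayout G :=
  let ⟨f, hf, hH⟩ := h
  ⟨f ∘ φ, hf.comp hφ, hH.comap φ⟩

lemma Crosses.split_left {f : V → ℚ} {a b c d : V} (h : Crosses f a b c d) (w : V)
    (hwc : f w ≠ f c) (hwd : f w ≠ f d) :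
    Crosses f a w c d ∨ Crosses f w b c d ∨ Crosses f c d b w := by
  obtain ⟨h₁, h₂, h₃⟩ := h
  rcases hwc.lt_or_gt with hwc | hwc
  · exact .inr (.inl ⟨hwc, h₂, h₃⟩)
  rcases hwd.lt_or_gt with hwd | hwd
  · exact .inl ⟨h₁, hwc, hwd⟩
  · exact .inr (.inr ⟨h₂, h₃, hwd⟩)

lemma Crosses.split_right {f : V → ℚ} {a b c d : V} (h : Crosses f a b c d) (w : V)
    (hwa : f w ≠ f a) (hwb : f w ≠ f b) :
    Crosses f w c a b ∨ Crosses f a b w d ∨ Crosses f a b c w := by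
  obtain ⟨h₁, h₂, h₃⟩ := h
  rcases hwa.lt_or_gt with hwa | hwa
  · exact .inl ⟨hwa, h₁, h₂⟩
  rcases hwb.lt_or_gt with hwb | hwb
  · exact .inr (.inl ⟨hwa, hwb, h₃⟩)
  · exact .inr (.inr ⟨h₁, h₂, hwb⟩)

lemma subdivideEdge_adj_inl {G : SimpleGraph V} {u v p q : V} (h : G.Adj p q) :
    s(p, q) = s(u, v) ∨ (subdivideEdge G u v).Adj (.inl p) (.inl q) := by
  refine or_iff_not_imp_left.2 fun hne => ?_
  exact ⟨by simpa using h.ne, .inl (.inl ⟨p, q, rfl, rfl, h, hne⟩)⟩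

lemma subdivideEdge_adj_inr {G : SimpleGraph V} {u v p q : V} (h : s(p, q) = s(u, v)) :
    (subdivideEdge G u v).Adj (.inl p) (.inr ()) ∧
      (subdivideEdge G u v).Adj (.inr ()) (.inl q) := by
  have hend : ∀ x, x ∈ s(u, v) → (subdivideEdge G u v).Adj (.inl x) (.inr ()) := fun x hx =>
    ⟨by simp, .inl (.inr ⟨x, rfl, rfl, Sym2.mem_iff.1 hx⟩)⟩
  exact ⟨hend p (h ▸ Sym2.mem_mk_left p q), (hend q (h ▸ Sym2.mem_mk_right p q)).symm⟩

lemma HasOnePageLayout.of_subdivideEdge {G : SimpleGraph V} {u v : V}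
    (h : HasOnePageLayout (subdivideEdge G u v)) : HasOnePageLayout G := by
  obtain ⟨f, hf, hcross⟩ := h
  refine ⟨f ∘ Sum.inl, hf.comp Sum.inl_injective, fun a b c d hab hcd hc => ?_⟩
  have hw : ∀ x : V, f (.inr ()) ≠ f (.inl x) := fun x => hf.ne Sum.inr_ne_inl
  change Crosses f (.inl a) (.inl b) (.inl c) (.inl d) at hc
  rcases subdivideEdge_adj_inl (u := u) (v := v) hab with hab' | hab' <;>
    rcases subdivideEdge_adj_inl (u := u) (v := v) hcd with hcd' | hcd'
  · obtain ⟨h₁, h₂, h₃⟩ := hc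
    rcases Sym2.eq_iff.1 (hab'.trans hcd'.symm) with ⟨rfl, rfl⟩ | ⟨rfl, rfl⟩
    · exact h₁.false
    · exact (h₁.trans (h₂.trans h₃)).false
  · obtain ⟨haw, hwb⟩ := subdivideEdge_adj_inr hab'
    rcases hc.split_left _ (hw c) (hw d) with hc | hc | hc
    · exact hcross _ _ _ _ haw hcd' hc
    · exact hcross _ _ _ _ hwb hcd' hc
    · exact hcross _ _ _ _ hcd' hwb.symm hc
  · obtain ⟨hcw, hwd⟩ := subdivideEdge_adj_inr hcd'
    rcases hc.split_right _ (hw a) (hw b) with hc | hc | hc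
    · exact hcross _ _ _ _ hcw.symm hab' hc
    · exact hcross _ _ _ _ hab' hwd hc
    · exact hcross _ _ _ _ hab' hcw hc
  · exact hcross _ _ _ _ hab' hcd' hc

lemma HasOnePageLayout.of_isSubdivision {A B : FGraph} (h : IsSubdivision A B)
    (hB : HasOnePageLayout B.2) : HasOnePageLayout A.2 := by
  induction h with
  | of_iso G H e =>
    exact hB.of_injective_hom (Classical.choice e).toHom (Classical.choice e).injective
  | step G _ H _ ih => exact (ih hB).of_subdivideEdge

lemma not_hasOnePageLayout_K4 : ¬ HasOnePageLayout K4 := by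
  rintro ⟨f, hf, hcross⟩
  set σ := Tuple.sort f
  have hσ : StrictMono (f ∘ σ) :=
    (Tuple.monotone_sort f).strictMono_of_injective (hf.comp σ.injective)
  have hadj : ∀ i j : Fin 4, i ≠ j → K4.Adj (σ i) (σ j) := fun i j hij =>
    σ.injective.ne hij
  exact hcross _ _ _ _ (hadj 0 2 (by decide)) (hadj 1 3 (by decide))
    ⟨hσ (by decide : (0 : Fin 4) < 1), hσ (by decide : (1 : Fin 4) < 2),
      hσ (by decide : (2 : Fin 4) < 3)⟩

lemma K23_adj (i : Fin 2) (j : Fin 3) : K23.Adj (.inl i) (.inr j) := by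
  simp [K23]

lemma not_nonCrossing_K23_of_lt {f : Fin 2 ⊕ Fin 3 → ℚ} (hf : Function.Injective f)
    {l m r : Fin 3} (hlm : f (.inr l) < f (.inr m)) (hmr : f (.inr m) < f (.inr r))
    (hm : f (.inl 0) < f (.inr m)) : ¬ NonCrossing K23 f := by
  intro hcross
  have hne : ∀ {x y}, x ≠ y → f x ≠ f y := hf.ne
  rcases (hne (x := .inl 1) (y := .inr m) (by simp)).lt_or_gt with hy | hy
  · rcases (hne (x := .inl 0) (y := .inl 1) (by simp)).lt_or_gt with hxy | hxy
    · exact hcross _ _ _ _ (K23_adj 0 m) (K23_adj 1 r) ⟨hxy, hy, hmr⟩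
    · exact hcross _ _ _ _ (K23_adj 1 m) (K23_adj 0 r) ⟨hxy, hm, hmr⟩
  rcases (hne (x := .inl 1) (y := .inr r) (by simp)).lt_or_gt with hyr | hyr
  · rcases (hne (x := .inr l) (y := .inl 0) (by simp)).lt_or_gt with hlx | hlx
    · exact hcross _ _ _ _ (K23_adj 1 l).symm (K23_adj 0 r) ⟨hlx, hm.trans hy, hyr⟩
    · exact hcross _ _ _ _ (K23_adj 0 m) (K23_adj 1 l).symm ⟨hlx, hlm, hy⟩
  · exact hcross _ _ _ _ (K23_adj 0 r) (K23_adj 1 m).symm ⟨hm, hmr, hyr⟩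

lemma not_hasOnePageLayout_K23 : ¬ HasOnePageLayout K23 := by
  rintro ⟨f, hf, hcross⟩
  set σ := Tuple.sort (f ∘ Sum.inr)
  have hσ : StrictMono ((f ∘ Sum.inr) ∘ σ) :=
    (Tuple.monotone_sort _).strictMono_of_injective (hf.comp (Sum.inr_injective.comp σ.injective))
  have h01 : f (.inr (σ 0)) < f (.inr (σ 1)) := hσ (by decide)
  have h12 : f (.inr (σ 1)) < f (.inr (σ 2)) := hσ (by decide)
  rcases (hf.ne (a₁ := .inl 0) (a₂ := .inr (σ 1)) (by simp)).lt_or_gt with hm | hm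
  · exact not_nonCrossing_K23_of_lt hf h01 h12 hm hcross
  · exact not_nonCrossing_K23_of_lt (f := -f) (neg_injective.comp hf) (neg_lt_neg h12)
      (neg_lt_neg h01) (neg_lt_neg hm) hcross.neg

lemma Outerplanar.of_hasOnePageLayout {G : SimpleGraph V} (h : HasOnePageLayout G) :
    Outerplanar G :=
  have hS (S : G.Subgraph) : HasOnePageLayout S.coe := h.of_injective_hom S.hom S.hom_injective
  ⟨fun ⟨S, hK⟩ => not_hasOnePageLayout_K4 (.of_isSubdivision hK (hS S)),
    fun ⟨S, hK⟩ => not_hasOnePageLayout_K23 (.of_isSubdivision hK (hS S))⟩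

end OnePageLayout

section Sigma

variable {V : Type} {G : SimpleGraph V} {a b : V} (P : G.Walk a b)

lemma sigmaGraph_adj_inl_inl {p q : V} : (sigmaGraph G P).Adj (.inl p) (.inl q) ↔ G.Adj p q := by
  simpa [sigmaGraph, G.adj_comm q p] using fun h : G.Adj p q => h.ne

lemma sigmaGraph_adj_inl_inr {p : V} {i : Fin P.length} :
    (sigmaGraph G P).Adj (.inl p) (.inr i) ↔ p = P.getVert i ∨ p = P.getVert (i + 1) := by
  simp [sigmaGraph]

lemma sigmaGraph_not_adj_inr_inr {i j : Fin P.length} :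
    ¬ (sigmaGraph G P).Adj (.inr i) (.inr j) := by
  simp [sigmaGraph]

def sigmaEmbedding : G ↪g sigmaGraph G P :=
  ⟨Function.Embedding.inl, sigmaGraph_adj_inl_inl P⟩

lemma sigmaWalk_of_lt {j : ℕ} (hj : j < P.length) :
    sigmaWalk G P j hj.le = .cons ((sigmaGraph_adj_inl_inr P).2 (.inl rfl))
      (.cons ((sigmaGraph_adj_inl_inr P (i := ⟨j, hj⟩)).2 (.inr rfl)).symm
        (sigmaWalk G P (j + 1) hj)) := by
  rw [sigmaWalk, dif_neg hj.ne]

lemma sigmaWalk_length (j : ℕ) (h : j ≤ P.length) :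
    (sigmaWalk G P j h).length = 2 * (P.length - j) := by
  induction j, h using sigmaWalk.induct G P with
  | case1 h => simp [sigmaWalk]
  | case2 j h hj hlt _ _ ih =>
    rw [sigmaWalk_of_lt P hlt, Walk.length_cons, Walk.length_cons, ih]
    omega

lemma sigmaWalk_getVert_even (j : ℕ) (h : j ≤ P.length) (m : ℕ) (hm : j + m ≤ P.length) :
    (sigmaWalk G P j h).getVert (2 * m) = .inl (P.getVert (j + m)) := by
  induction j, h using sigmaWalk.induct G P generalizing m with
  | case1 h => simp [sigmaWalk, show m = 0 by omega]
  | case2 j h hj hlt _ _ ih =>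
    rcases m with _ | m
    · simp
    rw [sigmaWalk_of_lt P hlt, show 2 * (m + 1) = 2 * m + 1 + 1 by ring, Walk.getVert_cons_succ,
      Walk.getVert_cons_succ, ih m (by omega), Nat.add_right_comm, Nat.add_assoc]

lemma sigmaWalk_getVert_odd (j : ℕ) (h : j ≤ P.length) (m : ℕ) (hm : j + m < P.length) :
    (sigmaWalk G P j h).getVert (2 * m + 1) = .inr ⟨j + m, hm⟩ := by
  induction j, h using sigmaWalk.induct G P generalizing m with
  | case1 h => omega
  | case2 j h hj hlt _ _ ih =>
    rw [sigmaWalk_of_lt P hlt]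
    rcases m with _ | m
    · simp
    rw [show 2 * (m + 1) + 1 = 2 * m + 1 + 1 + 1 by ring, Walk.getVert_cons_succ,
      Walk.getVert_cons_succ, ih m (by omega)]
    simp only [Sum.inr.injEq, Fin.mk.injEq]
    omega

end Sigma

namespace HGraph

variable (X : HGraph)

lemma step_length : X.step.P.length = 2 * X.P.length := by
  simp [step, sigmaWalk_length]

lemma step_getVert_even {m : ℕ} (hm : m ≤ X.P.length) :
    X.step.P.getVert (2 * m) = .inl (X.P.getVert m) := by
  simp [step, sigmaWalk_getVert_even X.P 0 _ m (by omega)]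

lemma step_getVert_odd {m : ℕ} (hm : m < X.P.length) :
    X.step.P.getVert (2 * m + 1) = .inr ⟨m, hm⟩ := by
  simp [step, sigmaWalk_getVert_odd X.P 0 _ m (by omega)]

end HGraph

section ConsecutiveLayout

variable {V W : Type}

def IsConsecutive (f : V → ℚ) (x y : V) : Prop := f x < f y ∧ ∀ z, ¬ (f x < f z ∧ f z < f y)

lemma NonCrossing.of_adj {G H : SimpleGraph V} {f : V → ℚ} (hG : NonCrossing G f)
    (h : ∀ x y, H.Adj x y → G.Adj x y ∨ IsConsecutive f x y ∨ IsConsecutive f y x) :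
    NonCrossing H f := by
  rintro a b c d hab hcd ⟨h₁, h₂, h₃⟩
  have hab' : G.Adj a b := by
    rcases h a b hab with hab | ⟨-, hab⟩ | ⟨hba, -⟩
    · exact hab
    · exact absurd ⟨h₁, h₂⟩ (hab c)
    · exact absurd (h₁.trans h₂) hba.asymm
  have hcd' : G.Adj c d := by
    rcases h c d hcd with hcd | ⟨-, hcd⟩ | ⟨hdc, -⟩
    · exact hcd
    · exact absurd ⟨h₂, h₃⟩ (hcd b)
    · exact absurd (h₂.trans h₃) hdc.asymm
  exact hG a b c d hab' hcd' ⟨h₁, h₂, h₃⟩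

lemma NonCrossing.map {G : SimpleGraph V} {f : W → ℚ} (φ : V ↪ W) (h : NonCrossing G (f ∘ φ)) :
    NonCrossing (G.map φ) f := by
  intro _ _ _ _ hab hcd
  obtain ⟨a, b, hab', rfl, rfl⟩ := (map_adj φ G _ _).1 hab
  obtain ⟨c, d, hcd', rfl, rfl⟩ := (map_adj φ G _ _).1 hcd
  exact h a b c d hab' hcd'

variable {G : SimpleGraph V} {a b : V}

def IsConsecutiveAlong (f : V → ℚ) (P : G.Walk a b) : Prop :=
  ∀ j < P.length, IsConsecutive f (P.getVert j) (P.getVert (j + 1))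

def sigmaLayout (P : G.Walk a b) (f : V → ℚ) : V ⊕ Fin P.length → ℚ :=
  Sum.elim f fun i => (f (P.getVert i) + f (P.getVert (i + 1))) / 2

variable {P : G.Walk a b} {f : V → ℚ}

lemma IsConsecutiveAlong.monotoneOn (hP : IsConsecutiveAlong f P) :
    MonotoneOn (fun j => f (P.getVert j)) (Set.Iic P.length) :=
  (strictMonoOn_Iic_of_lt_succ fun j hj => (hP j hj).1).monotoneOn

lemma IsConsecutiveAlong.sigmaLayout_inr (hP : IsConsecutiveAlong f P) (i : Fin P.length) :
    f (P.getVert i) < sigmaLayout P f (.inr i) ∧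
      sigmaLayout P f (.inr i) < f (P.getVert (i + 1)) := by
  have := (hP i i.2).1
  constructor <;> simp only [sigmaLayout, Sum.elim_inr] <;> linarith

lemma IsConsecutiveAlong.eq_inr_of_between (hP : IsConsecutiveAlong f P) {i : Fin P.length}
    {z : V ⊕ Fin P.length} (h₁ : f (P.getVert i) < sigmaLayout P f z)
    (h₂ : sigmaLayout P f z < f (P.getVert (i + 1))) : z = .inr i := by
  rcases z with w | j
  · exact absurd ⟨h₁, h₂⟩ ((hP i i.2).2 w)
  rcases lt_trichotomy j i with hji | rfl | hij
  · have : f (P.getVert (j + 1)) ≤ f (P.getVert i) :=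
      hP.monotoneOn (by simp) (by simp) (by omega)
    exact absurd (hP.sigmaLayout_inr j).2 (h₁.trans_le' this).not_gt
  · rfl
  · have : f (P.getVert (i + 1)) ≤ f (P.getVert j) :=
      hP.monotoneOn (by simp) (by simp) (by omega)
    exact absurd (hP.sigmaLayout_inr j).1 (h₂.trans_le this).not_gt

lemma IsConsecutiveAlong.sigmaLayout_injective (hP : IsConsecutiveAlong f P)
    (hf : Function.Injective f) : Function.Injective (sigmaLayout P f) := by
  have key : ∀ i z, sigmaLayout P f z = sigmaLayout P f (.inr i) → z = .inr i := fun i z hz =>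
    hP.eq_inr_of_between (hz ▸ (hP.sigmaLayout_inr i).1) (hz ▸ (hP.sigmaLayout_inr i).2)
  rintro (v | i) y hxy
  · rcases y with w | j
    · exact congrArg _ (hf hxy)
    · exact key j _ hxy
  · exact (key i y hxy.symm).symm

lemma IsConsecutiveAlong.sigmaLayout_left (hP : IsConsecutiveAlong f P) (i : Fin P.length) :
    IsConsecutive (sigmaLayout P f) (.inl (P.getVert i)) (.inr i) := by
  refine ⟨(hP.sigmaLayout_inr i).1, fun z ⟨hz₁, hz₂⟩ => hz₂.ne ?_⟩
  rw [hP.eq_inr_of_between hz₁ (hz₂.trans (hP.sigmaLayout_inr i).2)]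

lemma IsConsecutiveAlong.sigmaLayout_right (hP : IsConsecutiveAlong f P) (i : Fin P.length) :
    IsConsecutive (sigmaLayout P f) (.inr i) (.inl (P.getVert (i + 1))) := by
  refine ⟨(hP.sigmaLayout_inr i).2, fun z ⟨hz₁, hz₂⟩ => hz₁.ne' ?_⟩
  rw [hP.eq_inr_of_between ((hP.sigmaLayout_inr i).1.trans hz₁) hz₂]

lemma IsConsecutiveAlong.nonCrossing_sigmaGraph (hP : IsConsecutiveAlong f P) {e : Sym2 V}
    (hcross : NonCrossing (G.deleteEdges {e}) f) :
    NonCrossing ((sigmaGraph G P).deleteEdges {Sym2.map .inl e}) (sigmaLayout P f) := by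
  refine (hcross.map (f := sigmaLayout P f) .inl).of_adj fun x y hxy => ?_
  rw [deleteEdges_adj] at hxy
  rcases x with p | i <;> rcases y with q | j
  · refine .inl ((map_adj _ _ _ _).2 ⟨p, q, ?_, rfl, rfl⟩)
    refine deleteEdges_adj.2 ⟨(sigmaGraph_adj_inl_inl P).1 hxy.1, fun hpq => hxy.2 ?_⟩
    rw [Set.mem_singleton_iff] at hpq ⊢
    rw [← hpq, Sym2.map_mk]
  · rcases (sigmaGraph_adj_inl_inr P).1 hxy.1 with rfl | rfl
    · exact .inr (.inl (hP.sigmaLayout_left j))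
    · exact .inr (.inr (hP.sigmaLayout_right j))
  · rcases (sigmaGraph_adj_inl_inr P).1 hxy.1.symm with rfl | rfl
    · exact .inr (.inr (hP.sigmaLayout_left i))
    · exact .inr (.inl (hP.sigmaLayout_right i))
  · exact absurd hxy.1 (sigmaGraph_not_adj_inr_inr P)

end ConsecutiveLayout

section Brittleness

variable {V : Type}

lemma editDist_eq_one_of_deleteEdges [Finite V] {C : GraphClass} {G : SimpleGraph V} (hG : ¬ C V G)
    {e : Sym2 V} (he : e ∈ G.edgeSet) (hCe : C V (G.deleteEdges {e})) : editDist C G = 1 := by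
  refine le_antisymm (sInf_le ⟨{e}, by simpa, hCe, by simp⟩) (le_sInf ?_)
  rintro _ ⟨F, -, hF, rfl⟩
  have hF : F.Nonempty :=
    Set.nonempty_iff_ne_empty.2 fun h => hG (by rwa [h, deleteEdges_empty] at hF)
  exact_mod_cast (Set.ncard_pos (Set.toFinite F)).2 hF

lemma mem_crossEdges {G : SimpleGraph V} {f : V → ℕ} {u v : V} (h : G.Adj u v) (hf : f u ≠ f v) :
    s(u, v) ∈ crossEdges G f :=
  ⟨h, u, v, rfl, hf⟩

lemma two_le_ncard_crossEdges_top [Finite V] {f : V → ℕ} {u v x : V} (huv : f u ≠ f v)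
    (hxu : x ≠ u) (hxv : x ≠ v) : 2 ≤ (crossEdges ⊤ f).ncard := by
  wlog hx : f x ≠ f u generalizing u v
  · exact this huv.symm hxv hxu (by rwa [not_not.1 hx])
  have hne : s(x, u) ≠ s(u, v) := fun h => by
    rcases Sym2.eq_iff.1 h with ⟨h, -⟩ | ⟨h, -⟩
    exacts [hxu h, hxv h]
  calc 2 = ({s(x, u), s(u, v)} : Set (Sym2 V)).ncard := (Set.ncard_pair hne).symm
    _ ≤ _ := Set.ncard_le_ncard (Set.pair_subset (mem_crossEdges hxu hx)
        (mem_crossEdges (ne_of_apply_ne f huv) huv)) (Set.toFinite _)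

lemma two_le_edgeBrittleness_K4 : 2 ≤ edgeBrittleness OuterplanarClass K4 := by
  refine le_sInf ?_
  rintro _ ⟨f, hf, rfl⟩
  have hK4 : ¬ Outerplanar (K4.induce Set.univ) := fun h =>
    not_outerplanar_K4 (h.of_induce Set.mem_univ)
  obtain ⟨y, -, hy⟩ := exists_ne_of_not_outerplanar_induce hK4 hf (x := 0)
  obtain ⟨x, hxy, hx0⟩ := (by decide : ∀ y : Fin 4, ∃ x : Fin 4, x ≠ y ∧ x ≠ 0) y
  exact_mod_cast two_le_ncard_crossEdges_top hy hxy hx0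

variable {G : SimpleGraph V} {a b : V} {P : G.Walk a b}

lemma Outerplanar.induce_preimage_inl {f : V ⊕ Fin P.length → ℕ} {i : ℕ}
    (h : Outerplanar ((sigmaGraph G P).induce (f ⁻¹' {i}))) :
    Outerplanar (G.induce ((f ∘ Sum.inl) ⁻¹' {i})) :=
  h.induce_of_injective_hom (sigmaEmbedding P).toHom (sigmaEmbedding P).injective fun _ hv => hv

lemma exists_cut_sigmaGraph_edge (hP : ¬ Outerplanar (G.induce {v | v ∈ P.support}))
    {f : V ⊕ Fin P.length → ℕ} (hf : ∀ i, Outerplanar ((sigmaGraph G P).induce (f ⁻¹' {i}))) :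
    ∃ (i : Fin P.length) (p : V), (p = P.getVert i ∨ p = P.getVert (i + 1)) ∧
      f (.inl p) ≠ f (.inr i) := by
  obtain ⟨y, hy, hfy⟩ :=
    exists_ne_of_not_outerplanar_induce hP (fun i => (hf i).induce_preimage_inl) (x := a)
  by_contra! h
  have hconst : ∀ j ≤ P.length, f (.inl (P.getVert j)) = f (.inl a) := by
    intro j hj
    induction j with
    | zero => simp
    | succ j ih =>
      rw [h ⟨j, hj⟩ _ (.inr rfl), ← h ⟨j, hj⟩ _ (.inl rfl), ih (by omega)]
  obtain ⟨j, rfl, hj⟩ := Walk.mem_support_iff_exists_getVert.1 hy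
  exact hfy (hconst j hj)

lemma ncard_crossEdges_sigmaGraph [Finite V] (hP : ¬ Outerplanar (G.induce {v | v ∈ P.support}))
    {f : V ⊕ Fin P.length → ℕ} (hf : ∀ i, Outerplanar ((sigmaGraph G P).induce (f ⁻¹' {i}))) :
    (crossEdges G (f ∘ Sum.inl)).ncard + 1 ≤ (crossEdges (sigmaGraph G P) f).ncard := by
  obtain ⟨i, p, hp, hpi⟩ := exists_cut_sigmaGraph_edge hP hf
  set old := Sym2.map Sum.inl '' crossEdges G (f ∘ Sum.inl)
  have hnew : s(.inl p, .inr i) ∉ old := by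
    rintro ⟨e, -, he⟩
    induction e using Sym2.ind with
    | _ u v => simp at he
  have hold : old ⊆ crossEdges (sigmaGraph G P) f := by
    rintro _ ⟨_, ⟨he, u, v, rfl, huv⟩, rfl⟩
    exact mem_crossEdges ((sigmaGraph_adj_inl_inl P).2 he) huv
  calc (crossEdges G (f ∘ Sum.inl)).ncard + 1 = (insert s(.inl p, .inr i) old).ncard := by
        rw [Set.ncard_insert_of_notMem hnew,
          Set.ncard_image_of_injective _ (Sym2.map.injective Sum.inl_injective)]
    _ ≤ _ := Set.ncard_le_ncard (Set.insert_subset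
        (mem_crossEdges ((sigmaGraph_adj_inl_inr P).2 hp) hpi) hold) (Set.toFinite _)

lemma edgeBrittleness_sigmaGraph [Finite V] (hP : ¬ Outerplanar (G.induce {v | v ∈ P.support})) :
    edgeBrittleness OuterplanarClass G + 1 ≤ edgeBrittleness OuterplanarClass (sigmaGraph G P) := by
  refine le_sInf ?_
  rintro _ ⟨f, hf, rfl⟩
  calc edgeBrittleness OuterplanarClass G + 1 ≤ (crossEdges G (f ∘ Sum.inl)).ncard + 1 := by
        gcongr
        exact sInf_le ⟨_, fun i => (hf i).induce_preimage_inl, rfl⟩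
    _ ≤ _ := by exact_mod_cast ncard_crossEdges_sigmaGraph hP hf

end Brittleness

namespace HGraph

def IsNearlyOnePage (X : HGraph) : Prop :=
  ∃ e ∈ X.G.edgeSet, ∃ f : X.V → ℚ, Function.Injective f ∧
    NonCrossing (X.G.deleteEdges {e}) f ∧ IsConsecutiveAlong f X.P

lemma IsNearlyOnePage.step {X : HGraph} (h : X.IsNearlyOnePage) : X.step.IsNearlyOnePage := by
  obtain ⟨e, he, f, hf, hcross, hP⟩ := h
  refine ⟨Sym2.map Sum.inl e, ?_, sigmaLayout X.P f, hP.sigmaLayout_injective hf, ?_, ?_⟩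
  · induction e using Sym2.ind with
    | _ p q => exact (sigmaGraph_adj_inl_inl X.P).2 he
  · exact hP.nonCrossing_sigmaGraph hcross
  · intro j hj
    rw [step_length] at hj
    obtain ⟨m, rfl | rfl⟩ := Nat.even_or_odd' j
    · rw [step_getVert_even X (by omega), step_getVert_odd X (by omega)]
      exact hP.sigmaLayout_left ⟨m, by omega⟩
    · rw [step_getVert_odd X (by omega), show 2 * m + 1 + 1 = 2 * (m + 1) by ring,
        step_getVert_even X (by omega)]
      exact hP.sigmaLayout_right ⟨m, by omega⟩

lemma mem_support_step {X : HGraph} {v : X.V} (hv : v ∈ X.P.support) :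
    (.inl v : X.V ⊕ Fin X.P.length) ∈ X.step.P.support := by
  obtain ⟨n, rfl, hn⟩ := Walk.mem_support_iff_exists_getVert.1 hv
  exact Walk.mem_support_iff_exists_getVert.2
    ⟨2 * n, step_getVert_even X hn,
      (by omega : 2 * n ≤ 2 * X.P.length).trans_eq (step_length X).symm⟩

/-- The invariant of the hemmed graphs `(G_ℓ, P_ℓ)`. -/
structure Admissible (X : HGraph) : Prop where
  finite : Finite X.V
  not_outerplanar_support : ¬ Outerplanar (X.G.induce {v | v ∈ X.P.support})
  nearlyOnePage : X.IsNearlyOnePage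

variable {X : HGraph}

lemma Admissible.step (h : X.Admissible) : X.step.Admissible where
  finite := have := h.finite; inferInstanceAs (Finite (X.V ⊕ Fin X.P.length))
  not_outerplanar_support hX := h.not_outerplanar_support <|
    hX.induce_of_injective_hom (sigmaEmbedding X.P).toHom (sigmaEmbedding X.P).injective
      fun _ => mem_support_step
  nearlyOnePage := h.nearlyOnePage.step

lemma Admissible.iterate (h : X.Admissible) (k : ℕ) : (HGraph.step^[k] X).Admissible :=
  Function.Iterate.rec _ h (fun _ => Admissible.step) k

lemma Admissible.editDist_eq_one (h : X.Admissible) : editDist OuterplanarClass X.G = 1 := by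
  have := h.finite
  obtain ⟨e, he, f, hf, hcross, -⟩ := h.nearlyOnePage
  refine editDist_eq_one_of_deleteEdges (fun hG => h.not_outerplanar_support ?_) he
    (Outerplanar.of_hasOnePageLayout ⟨f, hf, hcross⟩)
  exact Outerplanar.induce hG _

lemma Admissible.edgeBrittleness_iterate (h : X.Admissible) (k : ℕ) :
    edgeBrittleness OuterplanarClass X.G + k ≤
      edgeBrittleness OuterplanarClass (HGraph.step^[k] X).G := by
  induction k with
  | zero => simp
  | succ k ih =>
    have := (h.iterate k).finite
    rw [Function.iterate_succ_apply', Nat.cast_succ, ← add_assoc]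
    exact (add_le_add ih le_rfl).trans
      (edgeBrittleness_sigmaGraph (h.iterate k).not_outerplanar_support)

end HGraph

section K4

variable {a b : Fin 4} {P : (⊤ : SimpleGraph (Fin 4)).Walk a b}

lemma isNearlyOnePage_K4 (hP : P.IsHamiltonian) : HGraph.IsNearlyOnePage ⟨Fin 4, ⊤, a, b, P⟩ := by
  have hlen : P.length = 3 := by simp [hP.length_eq]
  have hinj := hP.isPath.getVert_injOn
  set idx := Function.invFunOn P.getVert {i | i ≤ P.length}
  have hidx : ∀ v, idx v ≤ P.length ∧ P.getVert (idx v) = v := fun v => by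
    obtain ⟨n, h₁, h₂⟩ := Walk.mem_support_iff_exists_getVert.1 (hP.mem_support v)
    exact ⟨Function.invFunOn_mem (s := {i | i ≤ P.length}) ⟨n, h₂, h₁⟩,
      Function.invFunOn_eq ⟨n, h₂, h₁⟩⟩
  have hidx_getVert : ∀ j ≤ P.length, idx (P.getVert j) = j := fun j hj =>
    hinj.leftInvOn_invFunOn hj
  refine ⟨s(P.getVert 1, P.getVert 3), fun h => ?_, fun v => idx v, fun v w hvw => ?_, ?_, ?_⟩
  · exact absurd (hinj (by simp [hlen]) (by simp [hlen]) h) (by decide)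
  · rw [← (hidx v).2, ← (hidx w).2, Nat.cast_inj.1 hvw]
  · rintro p q c d - hcd ⟨h₁, h₂, h₃⟩
    simp only [Nat.cast_lt] at h₁ h₂ h₃
    have hd₃ := (hidx d).1
    have hc : idx c = 1 := by omega
    have hd : idx d = 3 := by omega
    exact (deleteEdges_adj.1 hcd).2 (by rw [← (hidx c).2, ← (hidx d).2, hc, hd]; rfl)
  · intro j hj
    simp only [IsConsecutive, hidx_getVert j hj.le, hidx_getVert (j + 1) hj, Nat.cast_lt]
    exact ⟨j.lt_succ_self, fun z ⟨h₁, h₂⟩ => by omega⟩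

lemma admissible_K4 (hP : P.IsHamiltonian) : HGraph.Admissible ⟨Fin 4, ⊤, a, b, P⟩ where
  finite := inferInstance
  not_outerplanar_support h := not_outerplanar_K4 (h.of_induce hP.mem_support)
  nearlyOnePage := isNearlyOnePage_K4 hP

lemma K4_iterate_step_bounds (hP : P.IsHamiltonian) (k : ℕ) :
    editDist OuterplanarClass (HGraph.step^[k] ⟨Fin 4, ⊤, a, b, P⟩).G = 1 ∧
      ((k + 2 : ℕ) : ℕ∞) ≤
        edgeBrittleness OuterplanarClass (HGraph.step^[k] ⟨Fin 4, ⊤, a, b, P⟩).G := by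
  have h := admissible_K4 hP
  refine ⟨(h.iterate k).editDist_eq_one, ?_⟩
  calc ((k + 2 : ℕ) : ℕ∞) = 2 + k := by push_cast; ring
    _ ≤ edgeBrittleness OuterplanarClass K4 + k := by gcongr; exact two_le_edgeBrittleness_K4
    _ ≤ _ := h.edgeBrittleness_iterate k

lemma exists_isHamiltonian_K4 : ∃ P : (⊤ : SimpleGraph (Fin 4)).Walk 0 3, P.IsHamiltonian :=
  ⟨.cons (v := 1) (by decide) <| .cons (v := 2) (by decide) <| .cons (by decide) .nil,
    fun v => by fin_cases v <;> rfl⟩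

end K4

theorem outerplanar_example_general (ℓ : ℕ) :
    (∃ (V : Type) (_ : Fintype V) (G : SimpleGraph V),
      editDist OuterplanarClass G = 1 ∧ (ℓ : ℕ∞) ≤ edgeBrittleness OuterplanarClass G) ∧
    (∀ (a b : Fin 4) (P₁ : (⊤ : SimpleGraph (Fin 4)).Walk a b), P₁.IsHamiltonian →
      editDist OuterplanarClass ((HGraph.step^[ℓ - 1] ⟨Fin 4, ⊤, a, b, P₁⟩).G) = 1 ∧
      ((ℓ : ℕ∞) + 1) ≤
        edgeBrittleness OuterplanarClass ((HGraph.step^[ℓ - 1] ⟨Fin 4, ⊤, a, b, P₁⟩).G)) := by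
  refine ⟨?_, fun a b P₁ hP => ?_⟩
  · obtain ⟨P₁, hP₁⟩ := exists_isHamiltonian_K4
    have := ((admissible_K4 hP₁).iterate (ℓ - 1)).finite
    obtain ⟨hed, hη⟩ := K4_iterate_step_bounds hP₁ (ℓ - 1)
    exact ⟨_, Fintype.ofFinite _, _, hed, le_trans (by norm_cast; omega) hη⟩
  · obtain ⟨hed, hη⟩ := K4_iterate_step_bounds hP (ℓ - 1)
    exact ⟨hed, le_trans (by norm_cast; omega) hη⟩

/-- For every positive `ℓ` there is a graph `G` with `e_𝒪(G) = 1` and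
`η_𝒪(G) ≥ ℓ`; concretely, for `G₁ = K₄` with a Hamiltonian path `P₁` and
`(G_ℓ, P_ℓ) = σ(G_{ℓ-1}, P_{ℓ-1})`, we have `e_𝒪(G_ℓ) = 1` and `η_𝒪(G_ℓ) ≥ ℓ + 1`. -/
theorem outerplanar_example (ℓ : ℕ) (hℓ : 0 < ℓ) :
    (∃ (V : Type) (_ : Fintype V) (G : SimpleGraph V),
      editDist OuterplanarClass G = 1 ∧ (ℓ : ℕ∞) ≤ edgeBrittleness OuterplanarClass G) ∧
    (∀ (a b : Fin 4) (P₁ : (⊤ : SimpleGraph (Fin 4)).Walk a b), P₁.IsHamiltonian →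
      editDist OuterplanarClass ((HGraph.step^[ℓ - 1] ⟨Fin 4, ⊤, a, b, P₁⟩).G) = 1 ∧
      ((ℓ : ℕ∞) + 1) ≤
        edgeBrittleness OuterplanarClass ((HGraph.step^[ℓ - 1] ⟨Fin 4, ⊤, a, b, P₁⟩).G)) :=
  outerplanar_example_general ℓ
end

section
/- For every positive integer n ≥ 2, the complete bipartite graph K_{2,n} satisfies κ_𝒜(K_{2,n}) = 2 and ν_𝒜(K_{2,n}) ≥ ⌊n/2⌋, where 𝒜 is the class of forests. -/
open Classical SimpleGraph

/-! Labelling each edge of `K_{2,n}` by its end of degree two splits the graph into stars,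
which pairwise meet only in the two vertices of degree `n`; hence `κ_𝒜(K_{2,n}) ≤ 2`.
Conversely, if at most one vertex of a 4-cycle is incident with edges of distinct parts, then
all four edges of the cycle lie in one part, which is not a forest; so `κ_𝒜(K_{2,n}) ≥ 2` as
soon as `K_{2,n}` has a 4-cycle, i.e. `n ≥ 2`. Finally, the 4-cycles through the two vertices
of degree `n` and the pairs `{2i, 2i+1}` are `⌊n/2⌋` edge-disjoint non-forests. -/

theorem SimpleGraph.not_isAcyclic_of_square {V : Type} {G : SimpleGraph V} {a b c d : V}
    (hac : a ≠ c) (hbd : b ≠ d) (hab : G.Adj a b) (hbc : G.Adj b c) (hcd : G.Adj c d)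
    (hda : G.Adj d a) : ¬ G.IsAcyclic := by
  intro hG
  have hp : (Walk.cons hab (Walk.cons hbc .nil)).IsPath := by
    simp [Walk.cons_isPath_iff, hab.ne, hbc.ne, hac]
  have hq : (Walk.cons hda.symm (Walk.cons hcd.symm .nil)).IsPath := by
    simp [Walk.cons_isPath_iff, hda.ne', hcd.ne', hac]
  have := congrArg (fun p : G.Path a c => p.1.support)
    ((hG.subsingleton_path a c).elim ⟨_, hp⟩ ⟨_, hq⟩)
  simp [hbd] at this

section Brittleness

variable {V : Type} {G : SimpleGraph V} {g : Sym2 V → ℕ}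

theorem partGraph_adj {i : ℕ} {x y : partSupport G g i} :
    (partGraph G g i).Adj x y ↔ G.Adj x y ∧ g s(x, y) = i := by
  simp only [partGraph, comap_adj, fromEdgeSet_adj, Function.Embedding.subtype_apply,
    Set.mem_ofPred_eq, mem_edgeSet]
  exact ⟨fun h => h.1, fun h => ⟨h, h.1.ne⟩⟩

theorem mem_partSupport_of_adj {x y : V} (h : G.Adj x y) : x ∈ partSupport G g (g s(x, y)) :=
  ⟨_, h, rfl, Sym2.mem_mk_left x y⟩

theorem partGraph_isAcyclic_of_forall_mem {i : ℕ} (w : V)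
    (hw : ∀ e ∈ G.edgeSet, g e = i → w ∈ e) : (partGraph G g i).IsAcyclic := by
  intro v
  obtain ⟨e, he, hei, -⟩ := v.2
  have hw' : w ∈ partSupport G g i := ⟨e, he, hei, hw e he hei⟩
  refine (isAcyclic_starGraph (⟨w, hw'⟩ : partSupport G g i)).anti (fun x y hxy => ?_) (v := v)
  rw [partGraph_adj] at hxy
  have hwxy := hw _ hxy.1 hxy.2
  rw [Sym2.mem_iff] at hwxy
  rw [starGraph_adj]
  exact ⟨fun h => hxy.1.ne (congrArg Subtype.val h),
    hwxy.imp (fun h => Subtype.ext h.symm) (fun h => Subtype.ext h.symm)⟩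

theorem label_eq_of_notMem_brittleVertices {v : V} (hv : v ∉ brittleVertices G g)
    {e₁ e₂ : Sym2 V} (he₁ : e₁ ∈ G.edgeSet) (he₂ : e₂ ∈ G.edgeSet) (hv₁ : v ∈ e₁)
    (hv₂ : v ∈ e₂) : g e₁ = g e₂ :=
  by_contra fun h => hv ⟨e₁, e₂, he₁, he₂, hv₁, hv₂, h⟩

theorem not_isAcyclic_partGraph_of_square {a b c d : V} (hac : a ≠ c) (hbd : b ≠ d)
    (hab : G.Adj a b) (hbc : G.Adj b c) (hcd : G.Adj c d) (hda : G.Adj d a)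
    (h₁ : g s(b, c) = g s(a, b)) (h₂ : g s(c, d) = g s(a, b)) (h₃ : g s(d, a) = g s(a, b)) :
    ¬ (partGraph G g (g s(a, b))).IsAcyclic := by
  have ha := mem_partSupport_of_adj (g := g) hab
  have hb := mem_partSupport_of_adj (g := g) hbc
  have hc := mem_partSupport_of_adj (g := g) hcd
  have hd := mem_partSupport_of_adj (g := g) hda
  rw [h₁] at hb; rw [h₂] at hc; rw [h₃] at hd
  refine not_isAcyclic_of_square (a := ⟨a, ha⟩) (b := ⟨b, hb⟩) (c := ⟨c, hc⟩) (d := ⟨d, hd⟩)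
    (by simpa using hac) (by simpa using hbd) ?_ ?_ ?_ ?_ <;> rw [partGraph_adj]
  exacts [⟨hab, rfl⟩, ⟨hbc, h₁⟩, ⟨hcd, h₂⟩, ⟨hda, h₃⟩]

theorem nontrivial_brittleVertices_of_square (hg : ∀ i, (partGraph G g i).IsAcyclic)
    {a b c d : V} (hac : a ≠ c) (hbd : b ≠ d)
    (hab : G.Adj a b) (hbc : G.Adj b c) (hcd : G.Adj c d) (hda : G.Adj d a) :
    (brittleVertices G g).Nontrivial := by
  by_contra! hB
  have ha : a ∉ brittleVertices G g → g s(d, a) = g s(a, b) := fun h =>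
    label_eq_of_notMem_brittleVertices h hda hab (Sym2.mem_mk_right _ _) (Sym2.mem_mk_left _ _)
  have hb : b ∉ brittleVertices G g → g s(a, b) = g s(b, c) := fun h =>
    label_eq_of_notMem_brittleVertices h hab hbc (Sym2.mem_mk_right _ _) (Sym2.mem_mk_left _ _)
  have hc : c ∉ brittleVertices G g → g s(b, c) = g s(c, d) := fun h =>
    label_eq_of_notMem_brittleVertices h hbc hcd (Sym2.mem_mk_right _ _) (Sym2.mem_mk_left _ _)
  have hd : d ∉ brittleVertices G g → g s(c, d) = g s(d, a) := fun h =>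
    label_eq_of_notMem_brittleVertices h hcd hda (Sym2.mem_mk_right _ _) (Sym2.mem_mk_left _ _)
  have := hab.ne; have := hbc.ne; have := hcd.ne; have := hda.ne
  -- At most one of `a, b, c, d` is brittle, so three of the equalities `ha`–`hd` hold,
  -- and any three of them identify all four labels.
  refine not_isAcyclic_partGraph_of_square hac hbd hab hbc hcd hda ?_ ?_ ?_ (hg _) <;>
    generalize g s(a, b) = l₁ at * <;> generalize g s(b, c) = l₂ at * <;>
    generalize g s(c, d) = l₃ at * <;> generalize g s(d, a) = l₄ at * <;>
    by_cases a ∈ brittleVertices G g <;> by_cases b ∈ brittleVertices G g <;>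
    by_cases c ∈ brittleVertices G g <;> grind [Set.Subsingleton]

theorem two_le_vertexBrittleness_forestClass_of_square [Finite V] {a b c d : V} (hac : a ≠ c)
    (hbd : b ≠ d) (hab : G.Adj a b) (hbc : G.Adj b c) (hcd : G.Adj c d) (hda : G.Adj d a) :
    2 ≤ vertexBrittleness ForestClass G := by
  refine le_sInf ?_
  rintro _ ⟨g, hg, rfl⟩
  exact_mod_cast Set.one_lt_ncard_iff_nontrivial.2
    (nontrivial_brittleVertices_of_square hg hac hbd hab hbc hcd hda)

theorem vertexBrittleness_forestClass_le_ncard_brittleVertices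
    (hg : ∀ i, ∃ w, ∀ e ∈ G.edgeSet, g e = i → w ∈ e) :
    vertexBrittleness ForestClass G ≤ (brittleVertices G g).ncard :=
  sInf_le ⟨g, fun i => (hg i).elim partGraph_isAcyclic_of_forall_mem, rfl⟩

end Brittleness

namespace K2n

variable {n : ℕ}

theorem adj_inl_inr (a : Fin 2) (b : Fin n) : (K2n n).Adj (Sum.inl a) (Sum.inr b) := by
  simp [K2n]

theorem exists_eq_of_mem_edgeSet {e : Sym2 (Fin 2 ⊕ Fin n)} (he : e ∈ (K2n n).edgeSet) :
    ∃ a b, e = s(Sum.inl a, Sum.inr b) := by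
  induction e using Sym2.ind with
  | _ x y =>
    rcases x with a | b <;> rcases y with a' | b'
    · simp [K2n] at he
    · exact ⟨a, b', rfl⟩
    · exact ⟨a', b, Sym2.eq_swap⟩
    · simp [K2n] at he

def rightEndLabel (n : ℕ) : Sym2 (Fin 2 ⊕ Fin n) → ℕ :=
  let f : Fin 2 ⊕ Fin n → ℕ := Sum.elim (fun _ => 0) Fin.val
  Sym2.lift ⟨fun x y => f x + f y, fun _ _ => add_comm _ _⟩

@[simp]
theorem rightEndLabel_mk (a : Fin 2) (b : Fin n) :
    rightEndLabel n s(Sum.inl a, Sum.inr b) = b := by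
  simp [rightEndLabel]

theorem exists_center_rightEndLabel (i : ℕ) :
    ∃ w, ∀ e ∈ (K2n n).edgeSet, rightEndLabel n e = i → w ∈ e := by
  by_cases hi : i < n
  · refine ⟨Sum.inr ⟨i, hi⟩, fun e he hei => ?_⟩
    obtain ⟨a, b, rfl⟩ := exists_eq_of_mem_edgeSet he
    obtain rfl : b = ⟨i, hi⟩ := Fin.ext (by simpa using hei)
    exact Sym2.mem_mk_right _ _
  · refine ⟨Sum.inl 0, fun e he hei => absurd ?_ hi⟩
    obtain ⟨a, b, rfl⟩ := exists_eq_of_mem_edgeSet he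
    simp [← hei]

theorem brittleVertices_rightEndLabel_subset :
    brittleVertices (K2n n) (rightEndLabel n) ⊆ {Sum.inl 0, Sum.inl 1} := by
  rintro (a | b) ⟨e₁, e₂, he₁, he₂, hv₁, hv₂, hne⟩
  · fin_cases a <;> simp
  · obtain ⟨a₁, b₁, rfl⟩ := exists_eq_of_mem_edgeSet he₁
    obtain ⟨a₂, b₂, rfl⟩ := exists_eq_of_mem_edgeSet he₂
    simp_all

theorem vertexBrittleness_forestClass_le_two : vertexBrittleness ForestClass (K2n n) ≤ 2 :=
  calc vertexBrittleness ForestClass (K2n n)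
      ≤ (brittleVertices (K2n n) (rightEndLabel n)).ncard :=
        vertexBrittleness_forestClass_le_ncard_brittleVertices exists_center_rightEndLabel
    _ ≤ ({Sum.inl 0, Sum.inl 1} : Set (Fin 2 ⊕ Fin n)).ncard := by
        exact_mod_cast Set.ncard_le_ncard brittleVertices_rightEndLabel_subset
    _ = 2 := by rw [Set.ncard_pair (by simp)]; rfl

theorem two_le_vertexBrittleness_forestClass (hn : 2 ≤ n) :
    2 ≤ vertexBrittleness ForestClass (K2n n) :=
  two_le_vertexBrittleness_forestClass_of_square (a := Sum.inl 0) (b := Sum.inr ⟨0, by omega⟩)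
    (c := Sum.inl 1) (d := Sum.inr ⟨1, hn⟩) (by simp) (by simp) (adj_inl_inr _ _)
    (adj_inl_inr _ _).symm (adj_inl_inr _ _) (adj_inl_inr _ _).symm

def square (n i : ℕ) : (K2n n).Subgraph :=
  (⊤ : (K2n n).Subgraph).induce
    {x | Sum.elim (fun _ => True) (fun b : Fin n => b.val / 2 = i) x}

theorem disjoint_edgeSet_square {i j : ℕ} (hij : i ≠ j) :
    Disjoint (square n i).edgeSet (square n j).edgeSet := by
  refine Set.disjoint_left.2 fun e hei hej => hij ?_
  obtain ⟨a, b, rfl⟩ := exists_eq_of_mem_edgeSet ((square n i).edgeSet_subset hei)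
  simp only [square, Subgraph.mem_edgeSet, Subgraph.induce_adj] at hei hej
  exact hei.2.1.symm.trans hej.2.1

theorem not_isAcyclic_square {i : ℕ} (hi : 2 * i + 1 < n) : ¬ (square n i).coe.IsAcyclic := by
  have h₀ : 2 * i / 2 = i := by omega
  have h₁ : (2 * i + 1) / 2 = i := by omega
  refine not_isAcyclic_of_square (a := ⟨Sum.inl 0, trivial⟩)
    (b := ⟨Sum.inr ⟨2 * i, by omega⟩, h₀⟩) (c := ⟨Sum.inl 1, trivial⟩)
    (d := ⟨Sum.inr ⟨2 * i + 1, hi⟩, h₁⟩)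
    (Subtype.coe_ne_coe.1 (by simp)) (Subtype.coe_ne_coe.1 (by simp)) ?_ ?_ ?_ ?_ <;>
    simp only [square, Subgraph.coe_adj, Subgraph.induce_adj, Subgraph.top_adj] <;>
    exact ⟨by simp [h₀, h₁], by simp [h₀, h₁], by simp [K2n]⟩

theorem div_two_le_capacity_forestClass : ((n / 2 : ℕ) : ℕ∞) ≤ capacity ForestClass (K2n n) :=
  le_sSup ⟨n / 2, rfl, fun i => square n i,
    fun _ _ hij => disjoint_edgeSet_square (Fin.val_injective.ne hij),
    fun i => not_isAcyclic_square (by omega)⟩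

end K2n

/-- For `n ≥ 2`, `κ_𝒜(K_{2,n}) = 2` and `ν_𝒜(K_{2,n}) ≥ ⌊n/2⌋`, with `𝒜`
the class of forests. -/
theorem K2n_brittleness_capacity (n : ℕ) (hn : 2 ≤ n) :
    vertexBrittleness ForestClass (K2n n) = 2 ∧
    ((n / 2 : ℕ) : ℕ∞) ≤ capacity ForestClass (K2n n) :=
  ⟨le_antisymm K2n.vertexBrittleness_forestClass_le_two
    (K2n.two_le_vertexBrittleness_forestClass hn), K2n.div_two_le_capacity_forestClass⟩
end
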